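/- Let W and Z be real Banach spaces, let N be an absolute norm and let W ⊕_a Z be the corresponding absolute sum, whose dual space is W* ⊕_{a*} Z* with the dual absolute norm acting by ⟨(w,z),(w*,z*)⟩ = w*(w) + z*(z). If (w,z) ∈ W ⊕_a Z and (w*,z*) ∈ W* ⊕_{a*} Z* satisfy ‖(w,z)‖_a = 1, ‖(w*,z*)‖_{a*} = 1 and w*(w) + z*(z) = 1, then w*(w) = ‖w*‖·‖w‖ and z*(z) = ‖z*‖·‖z‖. -/

import Mathlib

/-! Testing the functional against `(‖w‖ • u, ‖z‖ • v)` for unit vectors `u`, `v` — a vector of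
norm at most `N ‖w‖ ‖z‖ = 1`, because an absolute norm is monotone in the absolute values of
its arguments — gives `‖f‖ * ‖w‖ + ‖g‖ * ‖z‖ ≤ 1 = f w + g z`. As `f w ≤ ‖f‖ * ‖w‖` and
`g z ≤ ‖g‖ * ‖z‖`, both inequalities are equalities. -/

open Filter Topology

/-- `N` is an absolute norm on `ℝ²`: a norm with `N(1,0)=N(0,1)=1` and
`N(s,t)=N(|s|,|t|)`. -/
structure IsAbsoluteNorm (N : ℝ → ℝ → ℝ) : Prop where
  nonneg : ∀ s t : ℝ, 0 ≤ N s t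
  eq_zero_iff : ∀ s t : ℝ, N s t = 0 ↔ s = 0 ∧ t = 0
  triangle : ∀ s₁ t₁ s₂ t₂ : ℝ, N (s₁ + s₂) (t₁ + t₂) ≤ N s₁ t₁ + N s₂ t₂
  smul : ∀ c s t : ℝ, N (c * s) (c * t) = |c| * N s t
  one_zero : N 1 0 = 1
  zero_one : N 0 1 = 1
  abs_eq : ∀ s t : ℝ, N s t = N |s| |t|

namespace IsAbsoluteNorm

variable {N : ℝ → ℝ → ℝ}

theorem swap (hN : IsAbsoluteNorm N) : IsAbsoluteNorm (fun s t ↦ N t s) where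
  nonneg s t := hN.nonneg t s
  eq_zero_iff s t := (hN.eq_zero_iff t s).trans and_comm
  triangle s₁ t₁ s₂ t₂ := hN.triangle t₁ s₁ t₂ s₂
  smul c s t := hN.smul c t s
  one_zero := hN.zero_one
  zero_one := hN.one_zero
  abs_eq s t := hN.abs_eq t s

theorem convexOn_left (hN : IsAbsoluteNorm N) (t : ℝ) : ConvexOn ℝ Set.univ (N · t) := by
  refine ⟨convex_univ, fun x _ y _ a b ha hb hab ↦ ?_⟩
  calc N (a • x + b • y) t = N (a * x + b * y) (a * t + b * t) := by
        rw [← add_mul, hab, one_mul, smul_eq_mul, smul_eq_mul]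
    _ ≤ N (a * x) (a * t) + N (b * y) (b * t) := hN.triangle _ _ _ _
    _ = a • N x t + b • N y t := by
        rw [hN.smul, hN.smul, abs_of_nonneg ha, abs_of_nonneg hb, smul_eq_mul, smul_eq_mul]

theorem abs_left (hN : IsAbsoluteNorm N) (s t : ℝ) : N |s| t = N s t := by
  rw [hN.abs_eq, abs_abs, ← hN.abs_eq]

theorem mono_left (hN : IsAbsoluteNorm N) {s' s : ℝ} (t : ℝ) (h : |s'| ≤ |s|) :
    N s' t ≤ N s t := by
  have hs' : s' ∈ segment ℝ (-|s|) |s| := by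
    rw [segment_eq_Icc (by simp)]
    exact abs_le.mp h
  calc N s' t ≤ max (N (-|s|) t) (N |s| t) :=
        (hN.convexOn_left t).le_on_segment trivial trivial hs'
    _ = N s t := by rw [← hN.abs_left (-|s|), abs_neg, abs_abs, max_self, hN.abs_left]

theorem mono (hN : IsAbsoluteNorm N) {s' s t' t : ℝ} (hs : |s'| ≤ |s|) (ht : |t'| ≤ |t|) :
    N s' t' ≤ N s t :=
  (hN.mono_left t' hs).trans (hN.swap.mono_left s ht)

end IsAbsoluteNorm

theorem ContinuousLinearMap.opNorm_le_of_forall_apply_le {E : Type*} [NormedAddCommGroup E]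
    [NormedSpace ℝ E] (f : E →L[ℝ] ℝ) {C : ℝ} (h : ∀ u, ‖u‖ ≤ 1 → f u ≤ C) : ‖f‖ ≤ C := by
  have hC : 0 ≤ C := by simpa using h 0 (by simp)
  refine opNorm_le_of_unit_norm hC fun u hu ↦ abs_le.mpr ⟨?_, h u hu.le⟩
  simpa [neg_le] using h (-u) (by simpa using hu.le)

section AbsoluteSum

variable {W Z X : Type*} [NormedAddCommGroup W] [NormedSpace ℝ W]
  [NormedAddCommGroup Z] [NormedSpace ℝ Z] [NormedAddCommGroup X] [NormedSpace ℝ X]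
  {N : ℝ → ℝ → ℝ} (e : X ≃L[ℝ] W × Z)

theorem apply_add_apply_le_opNorm_mul (hN : IsAbsoluteNorm N)
    (he : ∀ x : X, ‖x‖ = N ‖(e x).1‖ ‖(e x).2‖) (f : W →L[ℝ] ℝ) (g : Z →L[ℝ] ℝ)
    {s t : ℝ} (hs : 0 ≤ s) (ht : 0 ≤ t) {u : W} {v : Z} (hu : ‖u‖ ≤ 1) (hv : ‖v‖ ≤ 1) :
    s * f u + t * g v ≤ ‖(f.comp (ContinuousLinearMap.fst ℝ W Z) +
        g.comp (ContinuousLinearMap.snd ℝ W Z)).comp (e : X →L[ℝ] W × Z)‖ * N s t := by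
  set F := (f.comp (ContinuousLinearMap.fst ℝ W Z) +
        g.comp (ContinuousLinearMap.snd ℝ W Z)).comp (e : X →L[ℝ] W × Z)
  set x := e.symm (s • u, t • v)
  have hFx : F x = s * f u + t * g v := by simp [F, x]
  have hx : ‖x‖ ≤ N s t := by
    rw [he, e.apply_symm_apply]
    refine hN.mono ?_ ?_
    · rw [abs_norm, norm_smul, Real.norm_of_nonneg hs, abs_of_nonneg hs]
      exact mul_le_of_le_one_right hs hu
    · rw [abs_norm, norm_smul, Real.norm_of_nonneg ht, abs_of_nonneg ht]
      exact mul_le_of_le_one_right ht hv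
  calc s * f u + t * g v ≤ ‖F x‖ := hFx ▸ le_abs_self _
    _ ≤ ‖F‖ * ‖x‖ := F.le_opNorm x
    _ ≤ ‖F‖ * N s t := by gcongr

theorem mul_norm_add_mul_norm_le_opNorm_mul (hN : IsAbsoluteNorm N)
    (he : ∀ x : X, ‖x‖ = N ‖(e x).1‖ ‖(e x).2‖) (f : W →L[ℝ] ℝ) (g : Z →L[ℝ] ℝ)
    {s t : ℝ} (hs : 0 ≤ s) (ht : 0 ≤ t) :
    s * ‖f‖ + t * ‖g‖ ≤ ‖(f.comp (ContinuousLinearMap.fst ℝ W Z) +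
        g.comp (ContinuousLinearMap.snd ℝ W Z)).comp (e : X →L[ℝ] W × Z)‖ * N s t := by
  set K := ‖(f.comp (ContinuousLinearMap.fst ℝ W Z) +
        g.comp (ContinuousLinearMap.snd ℝ W Z)).comp (e : X →L[ℝ] W × Z)‖ * N s t
  have hf : ∀ v : Z, ‖v‖ ≤ 1 → s * ‖f‖ ≤ K - t * g v := fun v hv ↦ by
    rw [← abs_of_nonneg hs, ← Real.norm_eq_abs, ← norm_smul]
    refine (s • f).opNorm_le_of_forall_apply_le fun u hu ↦ ?_
    show s * f u ≤ _
    linarith [apply_add_apply_le_opNorm_mul e hN he f g hs ht hu hv]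
  have hg : t * ‖g‖ ≤ K - s * ‖f‖ := by
    rw [← abs_of_nonneg ht, ← Real.norm_eq_abs, ← norm_smul]
    refine (t • g).opNorm_le_of_forall_apply_le fun v hv ↦ ?_
    show t * g v ≤ _
    linarith [hf v hv]
  linarith

end AbsoluteSum

theorem absolute_sum_duality_lemma_general (W Z X : Type*)
    [NormedAddCommGroup W] [NormedSpace ℝ W]
    [NormedAddCommGroup Z] [NormedSpace ℝ Z]
    [NormedAddCommGroup X] [NormedSpace ℝ X]
    (N : ℝ → ℝ → ℝ) (hN : IsAbsoluteNorm N)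
    (e : X ≃L[ℝ] W × Z) (he : ∀ x : X, ‖x‖ = N ‖(e x).1‖ ‖(e x).2‖)
    (w : W) (z : Z) (f : W →L[ℝ] ℝ) (g : Z →L[ℝ] ℝ)
    (hwz : N ‖w‖ ‖z‖ = 1)
    (hfg : ‖(f.comp (ContinuousLinearMap.fst ℝ W Z) +
        g.comp (ContinuousLinearMap.snd ℝ W Z)).comp (e : X →L[ℝ] W × Z)‖ = 1)
    (hsum : f w + g z = 1) :
    f w = ‖f‖ * ‖w‖ ∧ g z = ‖g‖ * ‖z‖ := by
  have hdual := mul_norm_add_mul_norm_le_opNorm_mul e hN he f g (norm_nonneg w) (norm_nonneg z)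
  rw [hfg, hwz, one_mul] at hdual
  have hfw : f w ≤ ‖f‖ * ‖w‖ := (le_abs_self _).trans (f.le_opNorm w)
  have hgz : g z ≤ ‖g‖ * ‖z‖ := (le_abs_self _).trans (g.le_opNorm z)
  constructor <;> linarith

theorem absolute_sum_duality_lemma (W Z X : Type*)
    [NormedAddCommGroup W] [NormedSpace ℝ W] [CompleteSpace W]
    [NormedAddCommGroup Z] [NormedSpace ℝ Z] [CompleteSpace Z]
    [NormedAddCommGroup X] [NormedSpace ℝ X] [CompleteSpace X]
    (N : ℝ → ℝ → ℝ) (hN : IsAbsoluteNorm N)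
    (e : X ≃L[ℝ] W × Z) (he : ∀ x : X, ‖x‖ = N ‖(e x).1‖ ‖(e x).2‖)
    (w : W) (z : Z) (f : W →L[ℝ] ℝ) (g : Z →L[ℝ] ℝ)
    (hwz : N ‖w‖ ‖z‖ = 1)
    (hfg : ‖(f.comp (ContinuousLinearMap.fst ℝ W Z) +
        g.comp (ContinuousLinearMap.snd ℝ W Z)).comp (e : X →L[ℝ] W × Z)‖ = 1)
    (hsum : f w + g z = 1) :
    f w = ‖f‖ * ‖w‖ ∧ g z = ‖g‖ * ‖z‖ :=
  absolute_sum_duality_lemma_general W Z X N hN e he w z f g hwz hfg hsum
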